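/- arXiv:2504.18850 — 2 statements merged into one kernel-verified Lean document; each statement's English description precedes it below -/
import Mathlib

section
/- Let b ∈ L^∞(Ω). Then for every f ∈ H, x ∈ G, y ∈ Y: (V_b f)(x,y) = ∫_{G×Y} f(u,v)·φ_b(x−u, y, v) dν(u) dλ(v). That is, every translation-invariant operator V_b = R* M_b R is an integral operator with convolution-type kernel φ_b. -/
open MeasureTheory Complex

/-!
By the Plancherel identity for `R`, the relation `R V_b = b R` and `χ ξ u⁻¹ = conj (χ ξ u)`, the
inner integral is `ℓ (K u v)` for the bounded functional `ℓ = ⟪K x y, V_b ·⟫`. It remains to see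
`∫ ev f · (ℓ ∘ K) = ℓ f` for every bounded functional `ℓ`. If `H` were complete this would be
`⟪h, f⟫ = ∫ conj (ev h) · ev f` for the Riesz representative `h` of `ℓ`; in general `h` lives only
in the completion of `H`. Approximating `h` by `s n ∈ H`, the integrands `ev f · conj (ev (s n))`
are Cauchy in `L¹` by Cauchy–Schwarz, and Fatou's lemma identifies their limit.

Nothing makes `ev u` itself measurable; only the pairings `conj (ev u) * ev v` are integrable,
which is why the argument works with these pairings rather than in `L²`.
-/

open Filter Topology UniformSpace
open scoped InnerProductSpace ComplexConjugate

theorem conj_mul_eq_polarization (a c : ℂ) :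
    conj a * c = 4⁻¹ * (conj (a + c) * (a + c) - conj (a - c) * (a - c))
      + (I * 4⁻¹) * (conj (a - I * c) * (a - I * c) - conj (a + I * c) * (a + I * c)) := by
  simp only [map_add, map_sub, map_mul, conj_I]
  linear_combination ((conj a * c - conj c * a) / 2) * I_sq

theorem integral_conj_mul_self_eq_ofReal {α : Type*} [MeasurableSpace α] (μ : Measure α)
    (F : α → ℂ) : ∫ p, conj (F p) * F p ∂μ = ((∫ p, ‖F p‖ ^ 2 ∂μ : ℝ) : ℂ) := by
  have h (z : ℂ) : conj z * z = ((‖z‖ ^ 2 : ℝ) : ℂ) := by simp [conj_mul']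
  simp_rw [h]
  exact integral_ofReal

theorem map_inv_eq_conj_of_norm_eq_one {G : Type*} [Group G] {χ : G → ℂ}
    (hmul : ∀ g h, χ (g * h) = χ g * χ h) (hnorm : ∀ g, ‖χ g‖ = 1) (g : G) :
    χ g⁻¹ = conj (χ g) := by
  have hne : χ g ≠ 0 := norm_ne_zero_iff.mp (by simp [hnorm])
  have hone : χ 1 = 1 := by
    have h1 : χ 1 ≠ 0 := norm_ne_zero_iff.mp (by simp [hnorm])
    simpa [h1] using (hmul 1 1).symm
  have : χ g * χ g⁻¹ = χ g * conj (χ g) := by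
    rw [← hmul, mul_inv_cancel, hone, mul_conj', hnorm]; simp
  exact mul_left_cancel₀ hne this

section IntegralIsometry

variable {E : Type*} [NormedAddCommGroup E] [InnerProductSpace ℂ E] {α : Type*}

theorem conj_mul_apply_eq_polarization (L : E →ₗ[ℂ] α → ℂ) (u v : E) (p : α) :
    conj (L u p) * L v p =
      4⁻¹ * (conj (L (u + v) p) * L (u + v) p - conj (L (u - v) p) * L (u - v) p)
      + (I * 4⁻¹) * (conj (L (u - I • v) p) * L (u - I • v) p
        - conj (L (u + I • v) p) * L (u + I • v) p) := by
  simpa using conj_mul_eq_polarization (L u p) (L v p)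

variable [MeasurableSpace α] {μ : Measure α} {L : E →ₗ[ℂ] α → ℂ}

theorem integrable_sq_norm_of_integral_eq (hL : ∀ u, ∫ p, ‖L u p‖ ^ 2 ∂μ = ‖u‖ ^ 2) (u : E) :
    Integrable (fun p => ‖L u p‖ ^ 2) μ := by
  rcases eq_or_ne u 0 with rfl | hu
  · simp
  · by_contra hni
    have := hL u
    rw [integral_undef hni] at this
    exact hu (by simpa using this.symm)

theorem integrable_conj_mul_self_of_integral_eq (hL : ∀ u, ∫ p, ‖L u p‖ ^ 2 ∂μ = ‖u‖ ^ 2)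
    (u : E) : Integrable (fun p => conj (L u p) * L u p) μ := by
  simp_rw [conj_mul']
  exact_mod_cast (integrable_sq_norm_of_integral_eq hL u).ofReal

theorem integrable_conj_mul_of_integral_eq (hL : ∀ u, ∫ p, ‖L u p‖ ^ 2 ∂μ = ‖u‖ ^ 2)
    (u v : E) : Integrable (fun p => conj (L u p) * L v p) μ := by
  have hsq := integrable_conj_mul_self_of_integral_eq hL
  simp_rw [conj_mul_apply_eq_polarization L u v]
  exact (((hsq _).sub (hsq _)).const_mul _).add (((hsq _).sub (hsq _)).const_mul _)

theorem integral_conj_mul_of_integral_eq (hL : ∀ u, ∫ p, ‖L u p‖ ^ 2 ∂μ = ‖u‖ ^ 2)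
    (u v : E) : ∫ p, conj (L u p) * L v p ∂μ = ⟪u, v⟫_ℂ := by
  have hsq := integrable_conj_mul_self_of_integral_eq hL
  simp_rw [conj_mul_apply_eq_polarization L u v]
  rw [integral_add, integral_const_mul, integral_const_mul, integral_sub, integral_sub]
  · simp only [integral_conj_mul_self_eq_ofReal, hL, inner_eq_sum_norm_sq_div_four (𝕜 := ℂ) u v,
      RCLike.I_to_complex, RCLike.ofReal_eq_complex_ofReal]
    push_cast
    ring
  all_goals first
    | exact hsq _
    | exact ((hsq _).sub (hsq _)).const_mul _

theorem integral_norm_mul_norm_le (hL : ∀ u, ∫ p, ‖L u p‖ ^ 2 ∂μ = ‖u‖ ^ 2) (u v : E) :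
    ∫ p, ‖L u p‖ * ‖L v p‖ ∂μ ≤ ‖u‖ * ‖v‖ := by
  have hmem (w : E) : MemLp (fun p => ‖L w p‖) (ENNReal.ofReal 2) μ := by
    have hint := integrable_sq_norm_of_integral_eq hL w
    have hmeas : AEStronglyMeasurable (fun p => ‖L w p‖) μ := by
      simpa [Real.sqrt_sq (norm_nonneg _)] using
        Real.continuous_sqrt.comp_aestronglyMeasurable hint.aestronglyMeasurable
    simpa [memLp_two_iff_integrable_sq hmeas] using hint
  have hroot (w : E) : (∫ p, ‖L w p‖ ^ (2 : ℝ) ∂μ) ^ (1 / 2 : ℝ) = ‖w‖ := by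
    simp_rw [Real.rpow_two, hL, ← Real.sqrt_eq_rpow, Real.sqrt_sq (norm_nonneg _)]
  simpa only [hroot] using integral_mul_le_Lp_mul_Lq_of_nonneg Real.HolderConjugate.two_two
    (ae_of_all _ fun _ => norm_nonneg _) (ae_of_all _ fun _ => norm_nonneg _) (hmem u) (hmem v)

theorem tendsto_integral_of_eLpNorm_sub_le {β : Type*} [MeasurableSpace β] {μ : Measure β}
    {F : Type*} [NormedAddCommGroup F] [NormedSpace ℝ F] {g : ℕ → β → F} {g' : β → F}
    (hg : ∀ n, Integrable (g n) μ) (hlim : ∀ p, Tendsto (fun n => g n p) atTop (𝓝 (g' p)))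
    {B : ℕ → ENNReal} (hB : Tendsto B atTop (𝓝 0))
    (hcau : ∀ n m, n ≤ m → eLpNorm (g m - g n) 1 μ ≤ B n) :
    Tendsto (fun n => ∫ p, g n p ∂μ) atTop (𝓝 (∫ p, g' p ∂μ)) := by
  have hmeas : AEStronglyMeasurable g' μ :=
    aestronglyMeasurable_of_tendsto_ae atTop (fun n => (hg n).aestronglyMeasurable)
      (ae_of_all _ hlim)
  have hbound (n : ℕ) : eLpNorm (g n - g') 1 μ ≤ B n := by
    rw [eLpNorm_sub_comm]
    calc eLpNorm (g' - g n) 1 μ ≤ atTop.liminf fun m => eLpNorm (g m - g n) 1 μ :=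
          Lp.eLpNorm_lim_le_liminf_eLpNorm
            (fun m => ((hg m).sub (hg n)).aestronglyMeasurable) _
            (ae_of_all _ fun p => ((hlim p).sub tendsto_const_nhds))
      _ ≤ B n := liminf_le_of_le (by isBoundedDefault) fun b hb => by
          obtain ⟨m, hm⟩ := hb.exists_forall_of_atTop
          exact (hm (max m n) (le_max_left _ _)).trans (hcau n _ (le_max_right _ _))
  exact tendsto_integral_of_L1' g' hmeas (Eventually.of_forall hg)
    (tendsto_of_tendsto_of_tendsto_of_le_of_le tendsto_const_nhds hB (fun _ => zero_le) hbound)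

theorem tendsto_inner_of_cauchySeq (hL : ∀ u, ∫ p, ‖L u p‖ ^ 2 ∂μ = ‖u‖ ^ 2) {s : ℕ → E}
    (hs : CauchySeq s) {Ψ : α → ℂ} (hΨ : ∀ p, Tendsto (fun n => L (s n) p) atTop (𝓝 (Ψ p)))
    (f : E) : Tendsto (fun n => ⟪s n, f⟫_ℂ) atTop (𝓝 (∫ p, conj (Ψ p) * L f p ∂μ)) := by
  obtain ⟨b, -, hb, hb0⟩ := cauchySeq_iff_le_tendsto_0.mp hs
  simp_rw [← integral_conj_mul_of_integral_eq hL]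
  refine tendsto_integral_of_eLpNorm_sub_le
    (fun n => integrable_conj_mul_of_integral_eq hL (s n) f)
    (fun p => ((continuous_conj.tendsto _).comp (hΨ p)).mul_const _)
    (by simpa using ENNReal.tendsto_ofReal (hb0.mul_const ‖f‖)) fun n m hnm => ?_
  have hdiff : (fun p => conj (L (s m) p) * L f p) - (fun p => conj (L (s n) p) * L f p)
      = fun p => conj (L (s m - s n) p) * L f p := by
    ext p; simp [sub_mul]
  rw [hdiff, eLpNorm_one_eq_lintegral_enorm,
    ← ofReal_integral_norm_eq_lintegral_enorm (integrable_conj_mul_of_integral_eq hL _ f)]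
  refine ENNReal.ofReal_le_ofReal ?_
  calc ∫ p, ‖conj (L (s m - s n) p) * L f p‖ ∂μ
      = ∫ p, ‖L (s m - s n) p‖ * ‖L f p‖ ∂μ := by simp only [norm_mul, RCLike.norm_conj]
    _ ≤ ‖s m - s n‖ * ‖f‖ := integral_norm_mul_norm_le hL _ _
    _ ≤ b n * ‖f‖ := by
        gcongr
        simpa [dist_eq_norm] using hb m n n hnm le_rfl

theorem exists_completion_inner_coe_eq (ℓ : E →L[ℂ] ℂ) :
    ∃ h : Completion E, ∀ g : E, ℓ g = ⟪h, (g : Completion E)⟫_ℂ := by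
  refine ⟨(InnerProductSpace.toDual ℂ (Completion E)).symm (ℓ.extend Completion.toComplL),
    fun g => ?_⟩
  rw [InnerProductSpace.toDual_symm_apply]
  exact (ℓ.extend_eq Completion.denseRange_coe (Completion.isUniformInducing_coe E) g).symm

theorem integral_mul_apply_kernel_eq (hL : ∀ u, ∫ p, ‖L u p‖ ^ 2 ∂μ = ‖u‖ ^ 2) {k : α → E}
    (hk : ∀ f p, L f p = ⟪k p, f⟫_ℂ) (ℓ : E →L[ℂ] ℂ) (f : E) :
    ∫ p, L f p * ℓ (k p) ∂μ = ℓ f := by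
  obtain ⟨h, hh⟩ := exists_completion_inner_coe_eq ℓ
  obtain ⟨t, ht_mem, ht⟩ := mem_closure_iff_seq_limit.mp (Completion.denseRange_coe h)
  choose s hs using ht_mem
  obtain rfl : (fun n => (s n : Completion E)) = t := funext hs
  have hcau : CauchySeq s :=
    (Completion.isUniformInducing_coe E).cauchy_map_iff.mp ht.cauchySeq
  have hpt (p : α) : Tendsto (fun n => L (s n) p) atTop (𝓝 ⟪(k p : Completion E), h⟫_ℂ) := by
    simpa only [hk, Completion.inner_coe] using
      (tendsto_const_nhds (x := (k p : Completion E))).inner (𝕜 := ℂ) ht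
  have hlim := tendsto_inner_of_cauchySeq hL hcau hpt f
  simp only [inner_conj_symm, ← hh] at hlim
  have hlim' : Tendsto (fun n => ⟪s n, f⟫_ℂ) atTop (𝓝 (ℓ f)) := by
    simpa only [hh, Completion.inner_coe] using
      ht.inner (𝕜 := ℂ) (tendsto_const_nhds (x := (f : Completion E)))
  simpa only [mul_comm] using tendsto_nhds_unique hlim hlim'

end IntegralIsometry

theorem integral_character_kernel_eq_inner {G Y Ω H : Type*} [Group G] [MeasurableSpace Ω]
    [NormedAddCommGroup H] [InnerProductSpace ℂ H] {m : Measure Ω} {χ : Ω → G → ℂ}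
    {q : Ω → Y → ℂ} (hχmul : ∀ ξ x u, χ ξ (x * u) = χ ξ x * χ ξ u)
    (hχnorm : ∀ ξ x, ‖χ ξ x‖ = 1) {R : H →ₗ[ℂ] Ω → ℂ}
    (hRiso : ∀ f, ∫ ξ, ‖R f ξ‖ ^ 2 ∂m = ‖f‖ ^ 2) {K : G → Y → H}
    (hRK : ∀ x y, (fun ξ => R (K x y) ξ) =ᵐ[m] fun ξ => conj (χ ξ x * q ξ y))
    {b : Ω → ℂ} {T : H → H} (hT : ∀ f, (fun ξ => R (T f) ξ) =ᵐ[m] fun ξ => b ξ * R f ξ)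
    (x u : G) (y v : Y) :
    ∫ ξ, χ ξ (x * u⁻¹) * q ξ y * conj (q ξ v) * b ξ ∂m = ⟪K x y, T (K u v)⟫_ℂ := by
  rw [← integral_conj_mul_of_integral_eq hRiso]
  refine integral_congr_ae ?_
  filter_upwards [hRK x y, hRK u v, hT (K u v)] with ξ hxy huv hTuv
  rw [hTuv, huv, hxy, hχmul, map_inv_eq_conj_of_norm_eq_one (hχmul ξ) (hχnorm ξ)]
  simp only [map_mul, conj_conj]
  ring

theorem Vb_integral_representation_general
    {G : Type*} [CommGroup G] [MeasurableSpace G] (ν : Measure G)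
    {Y : Type*} [MeasurableSpace Y] (lam : Measure Y)
    {H : Type*} [NormedAddCommGroup H] [InnerProductSpace ℂ H]
    (ev : H →ₗ[ℂ] (G × Y → ℂ)) (K : G → Y → H)
    (hrepr : ∀ (f : H) (p : G × Y), ev f p = (inner ℂ (K p.1 p.2) f : ℂ))
    (hinner : ∀ f g : H,
      (inner ℂ f g : ℂ) = ∫ p, (starRingEnd ℂ) (ev f p) * ev g p ∂(ν.prod lam))
    {Ω : Type*} [MeasurableSpace Ω] (m : Measure Ω)
    (χ : Ω → G → ℂ) (q : Ω → Y → ℂ)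
    (hχmul : ∀ ξ x u, χ ξ (x * u) = χ ξ x * χ ξ u)
    (hχnorm : ∀ ξ x, ‖χ ξ x‖ = 1)
    (R : H →ₗ[ℂ] (Ω → ℂ))
    (hRiso : ∀ f : H, ∫ ξ, ‖R f ξ‖ ^ 2 ∂m = ‖f‖ ^ 2)
    (hRK : ∀ x y, (fun ξ => R (K x y) ξ)
      =ᵐ[m] (fun ξ => (starRingEnd ℂ) (χ ξ x * q ξ y)))
    (b : Ω → ℂ)
    -- `V_b = R* M_b R`
    (Vb : H →L[ℂ] H)
    (hVb : ∀ f : H, (fun ξ => R (Vb f) ξ) =ᵐ[m] fun ξ => b ξ * R f ξ)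
    (f : H) (x : G) (y : Y) :
    ev (Vb f) (x, y)
      = ∫ p, ev f p *
          (∫ ξ, χ ξ (x * p.1⁻¹) * q ξ y * (starRingEnd ℂ) (q ξ p.2) * b ξ ∂m)
        ∂(ν.prod lam) := by
  have hev (u : H) : ∫ p, ‖ev u p‖ ^ 2 ∂(ν.prod lam) = ‖u‖ ^ 2 := by
    have h := hinner u u
    rw [integral_conj_mul_self_eq_ofReal, inner_self_eq_norm_sq_to_K] at h
    exact Complex.ofReal_injective (by simpa using h.symm)
  simp_rw [integral_character_kernel_eq_inner hχmul hχnorm hRiso hRK hVb]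
  rw [hrepr]
  exact (integral_mul_apply_kernel_eq hev hrepr ((innerSL ℂ (K x y)).comp Vb) f).symm

/-- every translation-invariant operator `V_b = R* M_b R` is an integral
operator with convolution-type kernel: `(V_b f)(x,y) = ∫_{G×Y} f(u,v) φ_b(x−u,y,v)`,
where `φ_b(x,y,v) = ∫_Ω ξ(x) q_ξ(y) conj(q_ξ(v)) b(ξ) dν̂(ξ)`.
(The group `G` is written multiplicatively.) -/
theorem Vb_integral_representation
    {G : Type*} [CommGroup G] [MeasurableSpace G] (ν : Measure G)
    {Y : Type*} [MeasurableSpace Y] (lam : Measure Y)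
    {H : Type*} [NormedAddCommGroup H] [InnerProductSpace ℂ H]
    (ev : H →ₗ[ℂ] (G × Y → ℂ)) (K : G → Y → H)
    (hrepr : ∀ (f : H) (p : G × Y), ev f p = (inner ℂ (K p.1 p.2) f : ℂ))
    (hinner : ∀ f g : H,
      (inner ℂ f g : ℂ) = ∫ p, (starRingEnd ℂ) (ev f p) * ev g p ∂(ν.prod lam))
    (hinv : ∀ x y u v, ev (K x y) (u, v) = ev (K 1 y) (u * x⁻¹, v))
    {Ω : Type*} [MeasurableSpace Ω] (m : Measure Ω)
    (χ : Ω → G → ℂ) (q : Ω → Y → ℂ)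
    (hχmul : ∀ ξ x u, χ ξ (x * u) = χ ξ x * χ ξ u)
    (hχnorm : ∀ ξ x, ‖χ ξ x‖ = 1)
    (R : H →ₗ[ℂ] (Ω → ℂ))
    (hRiso : ∀ f : H, ∫ ξ, ‖R f ξ‖ ^ 2 ∂m = ‖f‖ ^ 2)
    (hRK : ∀ x y, (fun ξ => R (K x y) ξ)
      =ᵐ[m] (fun ξ => (starRingEnd ℂ) (χ ξ x * q ξ y)))
    -- Fourier inversion: `R*` recovers a function from its transform
    (hRinv : ∀ f : H, Integrable (fun ξ => R f ξ) m → ∀ p : G × Y,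
      ev f p = ∫ ξ, χ ξ p.1 * q ξ p.2 * R f ξ ∂m)
    (b : Ω → ℂ) (Cb : ℝ) (hb : ∀ ξ, ‖b ξ‖ ≤ Cb)
    -- `V_b = R* M_b R`
    (Vb : H →L[ℂ] H)
    (hVb : ∀ f : H, (fun ξ => R (Vb f) ξ) =ᵐ[m] fun ξ => b ξ * R f ξ)
    (f : H) (x : G) (y : Y) :
    ev (Vb f) (x, y)
      = ∫ p, ev f p *
          (∫ ξ, χ ξ (x * p.1⁻¹) * q ξ y * (starRingEnd ℂ) (q ξ p.2) * b ξ ∂m)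
        ∂(ν.prod lam) :=
  Vb_integral_representation_general ν lam ev K hrepr hinner m χ q hχmul hχnorm R hRiso hRK b Vb hVb
    f x y
end

section
/- In the vertical-operator setting on the Bergman space of the upper half-plane (Ω = ℝ₊, L_{ξ,v}(y) = 4πξe^{−2π(y+v)ξ}), the function ψ(x,y,v) := 4π ∫₀^∞ ξ² e^{2πi(x+iy)ξ} e^{−2πvξ} dξ = −i/(π²(x+iy+iv)³) satisfies both membership conditions of A₀ (ψ(·,·,v) ∈ L²_hol(Π) and conj(ψ(−·,y,·)) ∈ L²_hol(Π)), but there is no b ∈ L^∞(ℝ₊) with ψ = φ_b; hence ψ ∈ A₀ \ A, i.e., A₀ strictly contains A. -/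
open MeasureTheory Complex Real

/-- The function `ψ(x,y,v) = −i/(π²(x+iy+iv)³)` from Remark on `A₀ ≠ A`
(vertical operators on the Bergman space of the upper half-plane). -/
noncomputable def psiA0 (x y v : ℝ) : ℂ :=
  -Complex.I / ((π : ℂ) ^ 2 * ((x : ℂ) + Complex.I * (y : ℂ) + Complex.I * (v : ℂ)) ^ 3)

/-! `ψ` is the Laplace-type integral `4π ∫₀^∞ ξ² e^{cξ} dξ = -8π/c³` at `c = 2πi(x+iy+iv)`,
`Re c = -2π(y+v) < 0`. For fixed `v > 0` it is a multiple of `(z + iv)⁻³`, holomorphic on the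
upper half-plane and bounded there by a multiple of `(1+|z|)⁻³`, hence square integrable.
If `ψ = φ_b` with `|b| ≤ C`, then on the imaginary axis `|ψ(0, t/2, t/2)| = 1/(π²t³)`, whereas
`|φ_b(0, t/2, t/2)| ≤ 4πC ∫₀^∞ ξ e^{-2πtξ} dξ = C/(πt²)`; this fails as `t → 0`. -/

open Filter Topology Set

lemma norm_ofReal_pow_mul_cexp {ξ : ℝ} (hξ : 0 ≤ ξ) (n : ℕ) (c : ℂ) :
    ‖(ξ : ℂ) ^ n * cexp (c * ξ)‖ = ξ ^ n * rexp (c.re * ξ) := by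
  simp [norm_exp, abs_of_nonneg hξ]

lemma integrableOn_pow_mul_exp_neg_mul_Ioi (n : ℕ) {b : ℝ} (hb : 0 < b) :
    IntegrableOn (fun ξ : ℝ => ξ ^ n * rexp (-b * ξ)) (Ioi 0) := by
  simpa [Real.rpow_natCast, Real.rpow_one] using
    integrableOn_rpow_mul_exp_neg_mul_rpow (s := n) (by linarith [n.cast_nonneg (α := ℝ)])
      one_pos hb

lemma integrableOn_ofReal_pow_mul_cexp_Ioi (n : ℕ) {c : ℂ} (hc : c.re < 0) :
    IntegrableOn (fun ξ : ℝ => (ξ : ℂ) ^ n * cexp (c * ξ)) (Ioi 0) := by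
  refine (integrableOn_pow_mul_exp_neg_mul_Ioi n (neg_pos.mpr hc)).mono'
    (by fun_prop) (ae_restrict_of_forall_mem measurableSet_Ioi fun ξ hξ => ?_)
  rw [norm_ofReal_pow_mul_cexp (le_of_lt hξ), neg_neg]

lemma tendsto_ofReal_pow_mul_cexp_atTop (n : ℕ) {c : ℂ} (hc : c.re < 0) :
    Tendsto (fun ξ : ℝ => (ξ : ℂ) ^ n * cexp (c * ξ)) atTop (𝓝 0) := by
  rw [tendsto_zero_iff_norm_tendsto_zero]
  refine (tendsto_rpow_mul_exp_neg_mul_atTop_nhds_zero n (-c.re) (neg_pos.mpr hc)).congr' ?_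
  filter_upwards [eventually_ge_atTop 0] with ξ hξ
  rw [norm_ofReal_pow_mul_cexp hξ, Real.rpow_natCast, neg_neg]

lemma integral_Ioi_sq_mul_cexp {c : ℂ} (hc : c.re < 0) :
    ∫ ξ in Ioi (0 : ℝ), (ξ : ℂ) ^ 2 * cexp (c * ξ) = -2 / c ^ 3 := by
  have hc0 : c ≠ 0 := by rintro rfl; simp at hc
  let F : ℂ → ℂ := fun z => cexp (c * z) * ((c * z) ^ 2 - 2 * (c * z) + 2) / c ^ 3
  have hF : ∀ z : ℂ, HasDerivAt F (z ^ 2 * cexp (c * z)) z := fun z => by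
    have h := (((hasDerivAt_id z).const_mul c).cexp.mul
      ((((hasDerivAt_id z).const_mul c).pow 2).sub
        (((hasDerivAt_id z).const_mul c).const_mul 2) |>.add_const 2)).div_const (c ^ 3)
    refine h.congr_deriv ?_
    simp only [id, Pi.pow_apply, Pi.sub_apply]
    field_simp
    ring
  have hlim : Tendsto (fun ξ : ℝ => F ξ) atTop (𝓝 0) := by
    have h := (((tendsto_ofReal_pow_mul_cexp_atTop 2 hc).const_mul (c ^ 2)).sub
      ((tendsto_ofReal_pow_mul_cexp_atTop 1 hc).const_mul (2 * c)) |>.add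
      ((tendsto_ofReal_pow_mul_cexp_atTop 0 hc).const_mul 2)).div_const (c ^ 3)
    simp only [mul_zero, sub_zero, add_zero, zero_div] at h
    refine h.congr fun ξ => ?_
    simp only [F]
    ring
  rw [integral_Ioi_of_hasDerivAt_of_tendsto (by fun_prop) (fun ξ _ => (hF ξ).comp_ofReal)
    (integrableOn_ofReal_pow_mul_cexp_Ioi 2 hc) hlim]
  simp only [F]
  field_simp
  simp

lemma integral_Ioi_mul_exp_neg_mul {b : ℝ} (hb : 0 < b) :
    ∫ ξ in Ioi (0 : ℝ), ξ * rexp (-b * ξ) = 1 / b ^ 2 := by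
  have h := Real.integral_rpow_mul_exp_neg_mul_Ioi two_pos hb
  norm_num [Real.Gamma_two] at h
  simpa [neg_mul] using h

lemma norm_setIntegral_Ioi_mul_cexp_le {b : ℝ → ℂ} {C : ℝ} (hb : ∀ ξ, 0 < ξ → ‖b ξ‖ ≤ C)
    {c : ℂ} (hc : c.re < 0) :
    ‖∫ ξ in Ioi (0 : ℝ), (ξ : ℂ) * b ξ * cexp (c * ξ)‖ ≤ C / c.re ^ 2 := by
  have hbound : ∀ ξ ∈ Ioi (0 : ℝ),
      ‖(ξ : ℂ) * b ξ * cexp (c * ξ)‖ ≤ C * (ξ * rexp (-(-c.re) * ξ)) := fun ξ hξ => by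
    rw [norm_mul, norm_mul, norm_exp, norm_real, Real.norm_of_nonneg (le_of_lt hξ), neg_neg]
    simp only [mul_re, ofReal_re, ofReal_im, mul_zero, sub_zero]
    have hξ0 : 0 ≤ ξ := le_of_lt hξ
    calc ξ * ‖b ξ‖ * rexp (c.re * ξ) ≤ ξ * C * rexp (c.re * ξ) := by gcongr; exact hb ξ hξ
      _ = _ := by ring
  calc _ ≤ ∫ ξ in Ioi (0 : ℝ), C * (ξ * rexp (-(-c.re) * ξ)) :=
        norm_integral_le_of_norm_le
          (by simpa using (integrableOn_pow_mul_exp_neg_mul_Ioi 1 (neg_pos.mpr hc)).const_mul C)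
          (ae_restrict_of_forall_mem measurableSet_Ioi hbound)
    _ = C / c.re ^ 2 := by
        rw [integral_const_mul, integral_Ioi_mul_exp_neg_mul (neg_pos.mpr hc)]
        ring

lemma add_I_mul_ne_zero {z : ℂ} {a : ℝ} (h : 0 < z.im + a) : z + I * a ≠ 0 := fun h0 => by
  have him : (z + I * a).im = z.im + a := by simp
  rw [h0, zero_im] at him
  linarith

lemma differentiableOn_div_pow_add_I_mul (c : ℂ) {a : ℝ} (ha : 0 ≤ a) (n : ℕ) :
    DifferentiableOn ℂ (fun z : ℂ => c / (z + I * a) ^ n) {z | 0 < z.im} :=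
  (differentiableOn_const c).div (by fun_prop) fun _ hz =>
    pow_ne_zero n (add_I_mul_ne_zero (add_pos_of_pos_of_nonneg hz ha))

lemma one_add_norm_le_mul_norm_add_I_mul {a : ℝ} (ha : 0 < a) {z : ℂ} (hz : 0 ≤ z.im) :
    1 + ‖z‖ ≤ (a⁻¹ + 2) * ‖z + I * a‖ := by
  set w := z + I * a
  have hw_im : w.im = z.im + a := by simp [w]
  have ha_le : a ≤ ‖w‖ := by linarith [im_le_norm w]
  have hz_le : ‖z‖ ≤ ‖w‖ + a := by
    simpa [w, abs_of_pos ha] using norm_sub_le w (I * a)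
  have hone : 1 ≤ a⁻¹ * ‖w‖ := by rwa [le_inv_mul_iff₀ ha, mul_one]
  nlinarith

lemma integrableOn_sq_norm_div_pow_add_I_mul (c : ℂ) {a : ℝ} (ha : 0 < a) {n : ℕ} (hn : 2 ≤ n) :
    IntegrableOn (fun z : ℂ => ‖c / (z + I * a) ^ n‖ ^ 2) {z | 0 < z.im} := by
  set A := a⁻¹ + 2
  have hA : 0 < A := by positivity
  have hint : Integrable fun z : ℂ => (‖c‖ * A ^ n) ^ 2 * (1 + ‖z‖) ^ (-(2 * n : ℝ)) :=
    (integrable_one_add_norm (by rw [finrank_real_complex]; norm_cast; omega)).const_mul _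
  refine hint.integrableOn.mono' (Measurable.aestronglyMeasurable (by fun_prop))
    (ae_restrict_of_forall_mem (measurableSet_lt measurable_const measurable_im) fun z hz => ?_)
  have hz0 : 0 < 1 + ‖z‖ := by positivity
  have hw : (1 + ‖z‖) / A ≤ ‖z + I * a‖ :=
    (div_le_iff₀' hA).mpr (one_add_norm_le_mul_norm_add_I_mul ha (le_of_lt hz))
  rw [Real.norm_of_nonneg (by positivity), norm_div, norm_pow]
  calc (‖c‖ / ‖z + I * a‖ ^ n) ^ 2 ≤ (‖c‖ / ((1 + ‖z‖) / A) ^ n) ^ 2 := by gcongr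
    _ = (‖c‖ * A ^ n) ^ 2 * (1 + ‖z‖) ^ (-(2 * n : ℝ)) := by
        rw [Real.rpow_neg hz0.le, show (2 * n : ℝ) = ((2 * n : ℕ) : ℝ) by push_cast; ring,
          Real.rpow_natCast, div_pow (1 + ‖z‖), div_div_eq_mul_div]
        ring

lemma integral_mul_cexp_mul_cexp (f : ℝ → ℂ) (x y v : ℝ) :
    ∫ ξ in Ioi (0 : ℝ), f ξ * cexp (2 * π * I * (x + I * y) * ξ) * cexp (-2 * π * v * ξ) =
      ∫ ξ in Ioi (0 : ℝ), f ξ * cexp (2 * π * I * (x + I * y + I * v) * ξ) := by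
  congr 1
  ext ξ
  rw [mul_assoc, ← Complex.exp_add]
  congr 2
  linear_combination (-2 * π * v * ξ : ℂ) * I_sq

lemma psiA0_eq_integral (x y v : ℝ) (h : 0 < y + v) :
    psiA0 x y v = 4 * (π : ℂ) * ∫ ξ in Ioi (0 : ℝ),
      (ξ : ℂ) ^ 2 * cexp (2 * π * I * (x + I * y) * ξ) * cexp (-2 * π * v * ξ) := by
  have hw : (x : ℂ) + I * y + I * v ≠ 0 := add_I_mul_ne_zero (by simpa using h)
  have hc : (2 * π * I * (x + I * y + I * v)).re < 0 := by
    have hre : (2 * π * I * (x + I * y + I * v)).re = -(2 * π * (y + v)) := by simp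
    rw [hre]
    exact neg_neg_of_pos (mul_pos two_pi_pos h)
  rw [integral_mul_cexp_mul_cexp, integral_Ioi_sq_mul_cexp hc, psiA0]
  generalize (x : ℂ) + I * y + I * v = w at hw ⊢
  field_simp
  norm_num [pow_succ, I_mul_I]

lemma conj_psiA0_neg (u y v : ℝ) : starRingEnd ℂ (psiA0 (-u) y v) = psiA0 u v y := by
  simp only [psiA0, map_div₀, map_neg, map_mul, map_pow, map_add, conj_I, conj_ofReal]
  rw [show ((-u : ℝ) : ℂ) + -I * y + -I * v = -(u + I * v + I * y) by push_cast; ring,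
    Odd.neg_pow (by decide), mul_neg, div_neg, neg_div, neg_neg]

lemma not_exists_bounded_psiA0_eq :
    ¬ ∃ b : ℝ → ℂ, (∃ C : ℝ, ∀ ξ : ℝ, 0 < ξ → ‖b ξ‖ ≤ C) ∧
      ∀ x y v : ℝ, 0 < y → 0 < v →
        psiA0 x y v = 4 * (π : ℂ) * ∫ ξ in Ioi (0 : ℝ),
          (ξ : ℂ) * b ξ * cexp (2 * π * I * (x + I * y) * ξ) * cexp (-2 * π * v * ξ) := by
  rintro ⟨b, ⟨C, hC⟩, hψ⟩
  have hC0 : 0 ≤ C := (norm_nonneg _).trans (hC 1 one_pos)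
  set t := 1 / (π * (C + 1)) with ht
  have htpos : 0 < t := by positivity
  have hpoint : ((0 : ℝ) : ℂ) + I * ((t / 2 : ℝ) : ℂ) + I * ((t / 2 : ℝ) : ℂ) = I * t := by
    push_cast; ring
  have hphase : 2 * π * I * (I * t) = ((-(2 * π * t) : ℝ) : ℂ) := by
    push_cast; linear_combination (2 * π * t : ℂ) * I_sq
  have key := hψ 0 (t / 2) (t / 2) (half_pos htpos) (half_pos htpos)
  rw [integral_mul_cexp_mul_cexp, hpoint, hphase, psiA0, hpoint] at key
  have hlhs : ‖-I / ((π : ℂ) ^ 2 * (I * t) ^ 3)‖ = 1 / (π ^ 2 * t ^ 3) := by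
    simp [abs_of_pos pi_pos, abs_of_pos htpos]
  have hrhs := norm_setIntegral_Ioi_mul_cexp_le hC
    (c := ((-(2 * π * t) : ℝ) : ℂ)) (by rw [ofReal_re]; exact neg_neg_of_pos (by positivity))
  have hineq : 1 / (π ^ 2 * t ^ 3) ≤ 4 * π * (C / (2 * π * t) ^ 2) := by
    rw [← hlhs, key, norm_mul]
    simpa [abs_of_pos pi_pos] using mul_le_mul_of_nonneg_left hrhs (by positivity : (0:ℝ) ≤ 4 * π)
  rw [ht] at hineq
  field_simp at hineq
  nlinarith [pi_pos]

/-- in the vertical-operator setting on the Bergman space of the upper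
half-plane, the function `ψ(x,y,v) = 4π∫₀^∞ ξ² e^{2πi(x+iy)ξ} e^{−2πvξ} dξ
= −i/(π²(x+iy+iv)³)` satisfies both membership conditions of `A₀` — for fixed `v > 0`
it is a square-integrable holomorphic function of `z = x+iy` on the upper half-plane,
and the conjugate `conj ψ(−u,y,v) = ψ(u,v,y)` is likewise a square-integrable
holomorphic function of `w = u+iv` — but there is no bounded `b` on `(0,∞)` with
`ψ = φ_b`; hence `ψ ∈ A₀ \ A`, so `A₀` strictly contains `A`. -/
theorem A0_strictly_contains_A :
    (∀ x y v : ℝ, 0 < y → 0 < v →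
      psiA0 x y v = 4 * (π : ℂ) * ∫ ξ in Set.Ioi (0 : ℝ),
        (ξ : ℂ) ^ 2 *
          Complex.exp (2 * (π : ℂ) * Complex.I * ((x : ℂ) + Complex.I * (y : ℂ)) * ξ) *
          Complex.exp (-2 * (π : ℂ) * (v : ℂ) * ξ)) ∧
    (∀ v : ℝ, 0 < v →
      DifferentiableOn ℂ
        (fun z : ℂ => -Complex.I / ((π : ℂ) ^ 2 * (z + Complex.I * (v : ℂ)) ^ 3))
        {z : ℂ | 0 < z.im} ∧
      IntegrableOn
        (fun z : ℂ => ‖-Complex.I / ((π : ℂ) ^ 2 * (z + Complex.I * (v : ℂ)) ^ 3)‖ ^ 2)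
        {z : ℂ | 0 < z.im} volume) ∧
    (∀ y : ℝ, 0 < y →
      (∀ u v : ℝ, (starRingEnd ℂ) (psiA0 (-u) y v) = psiA0 u v y) ∧
      DifferentiableOn ℂ
        (fun w : ℂ => -Complex.I / ((π : ℂ) ^ 2 * (w + Complex.I * (y : ℂ)) ^ 3))
        {w : ℂ | 0 < w.im} ∧
      IntegrableOn
        (fun w : ℂ => ‖-Complex.I / ((π : ℂ) ^ 2 * (w + Complex.I * (y : ℂ)) ^ 3)‖ ^ 2)
        {w : ℂ | 0 < w.im} volume) ∧
    ¬ ∃ b : ℝ → ℂ, (∃ C : ℝ, ∀ ξ : ℝ, 0 < ξ → ‖b ξ‖ ≤ C) ∧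
      ∀ x y v : ℝ, 0 < y → 0 < v →
        psiA0 x y v = 4 * (π : ℂ) * ∫ ξ in Set.Ioi (0 : ℝ),
          (ξ : ℂ) * b ξ *
            Complex.exp (2 * (π : ℂ) * Complex.I * ((x : ℂ) + Complex.I * (y : ℂ)) * ξ) *
            Complex.exp (-2 * (π : ℂ) * (v : ℂ) * ξ) := by
  have hbergman : ∀ a : ℝ, 0 < a →
      DifferentiableOn ℂ (fun z : ℂ => -I / ((π : ℂ) ^ 2 * (z + I * a) ^ 3)) {z | 0 < z.im} ∧
      IntegrableOn (fun z : ℂ => ‖-I / ((π : ℂ) ^ 2 * (z + I * a) ^ 3)‖ ^ 2) {z | 0 < z.im} :=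
    fun a ha => by
      simp only [div_mul_eq_div_div]
      exact ⟨differentiableOn_div_pow_add_I_mul _ ha.le 3,
        integrableOn_sq_norm_div_pow_add_I_mul _ ha (by norm_num)⟩
  exact ⟨fun x y v hy hv => psiA0_eq_integral x y v (add_pos hy hv), hbergman,
    fun y hy => ⟨fun u v => conj_psiA0_neg u y v, hbergman y hy⟩, not_exists_bounded_psiA0_eq⟩
end
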